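/- arXiv:1610.06624 — 2 statements merged into one kernel-verified Lean document; each statement's English description precedes it below -/
import Mathlib

section
/- For all positive integers n and r with 1 ≤ r ≤ n, the cardinality of Brk(n,r) equals the cardinality of Brk(n, n-r+1). -/
/-- Number of left brackets occurring at positions `≤ i` (position `j` holds the
integer `n - j`, so the sequence reads `n, n-1, ..., 1`; `p.1 j = true` means there is a
left bracket immediately before the `j`-th integer, `p.2 j = true` a right bracket
immediately after it; this encoding builds in that between two successive integers there
is at most one right bracket followed by at most one left bracket, and that every
bracket pair encloses at least one integer). -/
def leftsUpTo {n : ℕ} (p : (Fin n → Bool) × (Fin n → Bool)) (i : Fin n) : ℕ :=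
  (Finset.univ.filter fun j => j ≤ i ∧ p.1 j = true).card

def rightsUpTo {n : ℕ} (p : (Fin n → Bool) × (Fin n → Bool)) (i : Fin n) : ℕ :=
  (Finset.univ.filter fun j => j ≤ i ∧ p.2 j = true).card

def rightsBelow {n : ℕ} (p : (Fin n → Bool) × (Fin n → Bool)) (i : Fin n) : ℕ :=
  (Finset.univ.filter fun j => j < i ∧ p.2 j = true).card

/-- `p` is a non-crossing sequence of type `(n, r)`: `r` left and `r` right brackets,
the bracket word is balanced/properly nested (every prefix has at least as many left as
right brackets), and every integer lies strictly inside at least one bracket pair. -/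
def IsBrk (n r : ℕ) (p : (Fin n → Bool) × (Fin n → Bool)) : Prop :=
  (Finset.univ.filter fun j => p.1 j = true).card = r ∧
  (Finset.univ.filter fun j => p.2 j = true).card = r ∧
  (∀ i, rightsUpTo p i ≤ leftsUpTo p i) ∧
  (∀ i, rightsBelow p i < leftsUpTo p i)


/-!
A bracketing in `Brk(n, r)` always opens before `n` and closes after `1`, so it is
determined by which of the `n - 1` gaps between consecutive integers carry a right bracket
and which carry a left bracket. The dual bracketing puts a left bracket into a gap iff it
had no right bracket, and a right bracket iff it had no left bracket; this is an involution.
Writing `L(i)` for the number of left brackets up to position `i` and `R(<i)` for the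
number of right brackets before it, the prefix counts transform as `L'(i) = i + 1 - R(<i)`
and `R'(<i) = i + 1 - L(i)`, so the nesting condition `R(<i) < L(i)` is self-dual, while
the `r - 1` inner right brackets turn into `n - r` inner left brackets: `n - r + 1` pairs.
-/

open Finset

section Counting

variable {α : Type*} [Fintype α]

theorem card_filter_not_add_card_filter (c : α → Prop) [DecidablePred c] (Y : α → Bool) :
    #{k | c k ∧ (!Y k) = true} + #{k | c k ∧ Y k = true} = #{k | c k} := by
  rw [← card_filter_add_card_filter_not (s := univ.filter c) (p := fun k => (!Y k) = true)]
  simp only [filter_filter, Bool.not_eq_true', Bool.not_eq_false]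

theorem card_filter_le_eq_card_filter_lt_add [LinearOrder α] (X : α → Bool) (i : α) :
    #{j | j ≤ i ∧ X j = true} = #{j | j < i ∧ X j = true} + (X i).toNat := by
  cases h : X i
  · simp only [Bool.toNat_false, add_zero]
    congr 1
    ext j
    simp only [mem_filter, mem_univ, true_and, le_iff_lt_or_eq]
    grind
  · rw [Bool.toNat_true, ← card_insert_of_notMem (a := i) (by simp)]
    congr 1
    ext j
    simp only [mem_filter, mem_univ, true_and, le_iff_lt_or_eq, mem_insert]
    grind

end Counting

namespace Fin

theorem card_filter_castSucc_lt {m : ℕ} (i : Fin (m + 1)) :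
    #{k : Fin m | k.castSucc < i} = i := by
  simp only [Fin.lt_def, Fin.val_castSucc, Fin.card_filter_val_lt]
  omega

theorem card_filter_lt_and_eq_castSucc {m : ℕ} (X : Fin (m + 1) → Bool) (i : Fin (m + 1)) :
    #{j | j < i ∧ X j = true} = #{k : Fin m | k.castSucc < i ∧ X k.castSucc = true} := by
  simp only [card_filter, Fin.sum_univ_castSucc, (Fin.le_last i).not_gt, false_and, if_false,
    add_zero]

theorem card_filter_le_and_eq_succ {m : ℕ} (X : Fin (m + 1) → Bool) (i : Fin (m + 1)) :
    #{j | j ≤ i ∧ X j = true} =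
      (X 0).toNat + #{k : Fin m | k.castSucc < i ∧ X k.succ = true} := by
  simp only [card_filter, Fin.sum_univ_succ, Fin.zero_le, true_and, Fin.castSucc_lt_iff_succ_le]
  cases X 0 <;> rfl

end Fin

theorem rightsUpTo_le_leftsUpTo_of_rightsBelow_lt {n : ℕ}
    {p : (Fin n → Bool) × (Fin n → Bool)} {i : Fin n} (h : rightsBelow p i < leftsUpTo p i) :
    rightsUpTo p i ≤ leftsUpTo p i := by
  have := card_filter_le_eq_card_filter_lt_add p.2 i
  have := Bool.toNat_le (p.2 i)
  rw [rightsUpTo, rightsBelow] at *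
  omega

def bracketDual {m : ℕ} (p : (Fin (m + 1) → Bool) × (Fin (m + 1) → Bool)) :
    (Fin (m + 1) → Bool) × (Fin (m + 1) → Bool) :=
  (Fin.cons true fun k => !p.2 k.castSucc, Fin.snoc (fun k => !p.1 k.succ) true)

section Dual

variable {m : ℕ} (p : (Fin (m + 1) → Bool) × (Fin (m + 1) → Bool))

theorem leftsUpTo_bracketDual_add_rightsBelow (i : Fin (m + 1)) :
    leftsUpTo (bracketDual p) i + rightsBelow p i = i + 1 := by
  rw [leftsUpTo, rightsBelow, Fin.card_filter_le_and_eq_succ, Fin.card_filter_lt_and_eq_castSucc]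
  simp only [bracketDual, Fin.cons_zero, Fin.cons_succ, Bool.toNat_true]
  rw [add_assoc, card_filter_not_add_card_filter, Fin.card_filter_castSucc_lt, add_comm]

theorem rightsBelow_bracketDual_add_leftsUpTo (hp : p.1 0 = true) (i : Fin (m + 1)) :
    rightsBelow (bracketDual p) i + leftsUpTo p i = i + 1 := by
  rw [leftsUpTo, rightsBelow, Fin.card_filter_le_and_eq_succ, Fin.card_filter_lt_and_eq_castSucc]
  simp only [bracketDual, Fin.snoc_castSucc, hp, Bool.toNat_true]
  rw [add_left_comm, card_filter_not_add_card_filter, Fin.card_filter_castSucc_lt, add_comm]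

theorem card_filter_fst_eq_leftsUpTo_last :
    #{j | p.1 j = true} = leftsUpTo p (Fin.last m) := by
  simp only [leftsUpTo, Fin.le_last, true_and]

theorem card_filter_snd_eq_rightsBelow_last_add :
    #{j | p.2 j = true} = rightsBelow p (Fin.last m) + (p.2 (Fin.last m)).toNat := by
  rw [rightsBelow, ← card_filter_le_eq_card_filter_lt_add]
  simp only [Fin.le_last, true_and]

theorem bracketDual_snd_last : (bracketDual p).2 (Fin.last m) = true := by
  simp only [bracketDual, Fin.snoc_last]

theorem bracketDual_bracketDual (h0 : p.1 0 = true) (hlast : p.2 (Fin.last m) = true) :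
    bracketDual (bracketDual p) = p := by
  ext i
  · induction i using Fin.cases <;> simp [bracketDual, h0]
  · induction i using Fin.lastCases <;> simp [bracketDual, hlast]

end Dual

namespace IsBrk

variable {m r : ℕ} {p : (Fin (m + 1) → Bool) × (Fin (m + 1) → Bool)}

theorem fst_zero (h : IsBrk (m + 1) r p) : p.1 0 = true := by
  have := h.2.2.2 0
  rw [leftsUpTo, Fin.card_filter_le_and_eq_succ] at this
  simp only [Fin.not_lt_zero, false_and, filter_false, card_empty, add_zero] at this
  cases h0 : p.1 0 <;> simp_all

theorem snd_last (h : IsBrk (m + 1) r p) : p.2 (Fin.last m) = true := by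
  have hlt := h.2.2.2 (Fin.last m)
  have hr := h.2.1
  rw [card_filter_snd_eq_rightsBelow_last_add] at hr
  rw [← card_filter_fst_eq_leftsUpTo_last, h.1] at hlt
  cases hl : p.2 (Fin.last m) <;> simp_all

end IsBrk

theorem isBrk_bracketDual {m r s : ℕ} {p : (Fin (m + 1) → Bool) × (Fin (m + 1) → Bool)}
    (h : IsBrk (m + 1) r p) (hrs : r + s = m + 2) :
    IsBrk (m + 1) s (bracketDual p) := by
  have hL : leftsUpTo p (Fin.last m) = r := (card_filter_fst_eq_leftsUpTo_last p).symm.trans h.1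
  have hR : rightsBelow p (Fin.last m) + 1 = r := by
    simpa only [h.snd_last, Bool.toNat_true, h.2.1] using
      (card_filter_snd_eq_rightsBelow_last_add p).symm
  have hA := leftsUpTo_bracketDual_add_rightsBelow p
  have hB := rightsBelow_bracketDual_add_leftsUpTo p h.fst_zero
  have hinside (i) : rightsBelow (bracketDual p) i < leftsUpTo (bracketDual p) i := by
    have := hA i; have := hB i; have := h.2.2.2 i; omega
  have hA_last := hA (Fin.last m)
  have hB_last := hB (Fin.last m)
  rw [Fin.val_last] at hA_last hB_last
  refine ⟨?_, ?_, fun i => ?_, hinside⟩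
  · rw [card_filter_fst_eq_leftsUpTo_last]
    omega
  · rw [card_filter_snd_eq_rightsBelow_last_add, bracketDual_snd_last, Bool.toNat_true]
    omega
  · exact rightsUpTo_le_leftsUpTo_of_rightsBelow_lt (hinside i)

def bracketDualEquiv {m r s : ℕ} (hrs : r + s = m + 2) :
    {p // IsBrk (m + 1) r p} ≃ {p // IsBrk (m + 1) s p} where
  toFun p := ⟨bracketDual p.1, isBrk_bracketDual p.2 hrs⟩
  invFun p := ⟨bracketDual p.1, isBrk_bracketDual p.2 (by omega)⟩
  left_inv p := Subtype.ext (bracketDual_bracketDual p.1 p.2.fst_zero p.2.snd_last)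
  right_inv p := Subtype.ext (bracketDual_bracketDual p.1 p.2.fst_zero p.2.snd_last)

/-- `|Brk(n,r)| = |Brk(n, n-r+1)|`. -/
theorem brk_card_symm (n r : ℕ) (h1 : 1 ≤ r) (h2 : r ≤ n) :
    Nat.card {p : (Fin n → Bool) × (Fin n → Bool) // IsBrk n r p} =
      Nat.card {p : (Fin n → Bool) × (Fin n → Bool) // IsBrk n (n - r + 1) p} := by
  obtain ⟨m, rfl⟩ : ∃ m, n = m + 1 := ⟨n - 1, by omega⟩
  exact Nat.card_congr (bracketDualEquiv (by omega))
end

section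
/- Let α ∈ S_n and β = [α, j] ∈ S_{n+1}. Writing c(σ) for the number of cycles of a permutation σ (including fixed points): if j = 0 then c(β) = c(α); if j ≥ 1 and j lies in the same cycle of α as 1, then c(β) = c(α) + 1; if j ≥ 1 and j does not lie in the cycle of α containing 1, then c(β) = c(α) - 1. -/
/-- Number of cycles of `α`, counting fixed points as 1-cycles. -/
def cycleCount {m : ℕ} (α : Equiv.Perm (Fin m)) : ℕ :=
  Multiset.card α.cycleType + (Finset.univ.filter fun x => α x = x).card

/-- Extension of `α ∈ S_m` to `S_{m+1}` fixing the new top element `Fin.last m`. -/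
def liftPerm {m : ℕ} (α : Equiv.Perm (Fin m)) : Equiv.Perm (Fin (m + 1)) :=
  finSuccEquivLast.symm.permCongr α.optionCongr

/-- The "Case 0" construction `[α, 0]`: extend the chain of `Q̂_α` by a new arrow at the
top (here `0` plays the role of the paper's distinguished element `1`, and
`Fin.last m` the role of the new element `n+1`): the resulting permutation sends
`0 ↦ last`, `last ↦ α 0`, and agrees with `α` elsewhere. -/
def chainExt {m : ℕ} (α : Equiv.Perm (Fin m)) : Equiv.Perm (Fin (m + 1)) :=
  liftPerm α * Equiv.swap 0 (Fin.last m)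

/-- The cut-and-reconnect construction `[α, j]`: `insPerm α none = [α, 0]` (Case 0),
and for a target `j` of `Q̂_α`, `insPerm α (some j)` cuts the arrow `i → j` of `Q̂_α`
and reconnects via new arrows (virtual vertex) `→ j` and `i →` (new top vertex). -/
def insPerm {m : ℕ} (α : Equiv.Perm (Fin m)) : Option (Fin m) → Equiv.Perm (Fin (m + 1))
  | none => chainExt α
  | some j => Equiv.swap (Fin.last m) j.castSucc * chainExt α

/-!
Multiplying a permutation by a transposition `(a b)` does not touch the cycles avoiding `a` and
`b`, so the cycle count can only change through the one or two cycles through `a` and `b`; since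
the sign flips, it changes by exactly one: up if `a` and `b` share a cycle, down otherwise.
`[α, 0]` is the lift of `α` (with the new point fixed) multiplied by a transposition joining that
fixed point to the cycle of `α 0`, and `[α, j]` is `[α, 0]` multiplied by `(last j)`, where `last`
and `j` share a cycle of `[α, 0]` exactly when `j` shares the cycle of `0` in `α`.
-/

open Equiv Finset

namespace Equiv.Perm

variable {α β : Type*}

theorem SameCycle.map_of_forall [Finite α] {σ : Perm α} {τ : Perm β} {x y : α} (f : α → β)
    (hf : ∀ z, σ.SameCycle x z → τ.SameCycle (f z) (f (σ z))) (hxy : σ.SameCycle x y) :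
    τ.SameCycle (f x) (f y) := by
  obtain ⟨n, rfl⟩ := hxy.exists_nat_pow_eq
  clear hxy
  induction n with
  | zero => rfl
  | succ n ih =>
    rw [pow_succ', mul_apply]
    exact ih.trans (hf _ SameCycle.rfl.pow_right)

theorem pow_apply_eq_of_forall_sameCycle {σ τ : Perm α} {x : α}
    (h : ∀ z, σ.SameCycle x z → τ z = σ z) (n : ℕ) : (τ ^ n) x = (σ ^ n) x := by
  induction n with
  | zero => rfl
  | succ n ih =>
    rw [pow_succ', mul_apply, ih, h _ SameCycle.rfl.pow_right, ← mul_apply, ← pow_succ']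

theorem sameCycle_iff_of_forall_sameCycle [Finite α] {σ τ : Perm α} {x y : α}
    (h : ∀ z, σ.SameCycle x z → τ z = σ z) : τ.SameCycle x y ↔ σ.SameCycle x y := by
  constructor
  · intro hτ
    obtain ⟨n, rfl⟩ := hτ.exists_nat_pow_eq
    rw [pow_apply_eq_of_forall_sameCycle h]
    exact SameCycle.rfl.pow_right
  · intro hσ
    obtain ⟨n, rfl⟩ := hσ.exists_nat_pow_eq
    rw [← pow_apply_eq_of_forall_sameCycle h]
    exact SameCycle.rfl.pow_right

variable [Fintype α] [DecidableEq α] {σ : Perm α} {a b x y : α}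

def cycleClass (σ : Perm α) (x : α) : Finset α := {y | σ.SameCycle x y}

def cycleClasses (σ : Perm α) : Finset (Finset α) := univ.image σ.cycleClass

@[simp]
theorem mem_cycleClass : y ∈ σ.cycleClass x ↔ σ.SameCycle x y := by
  simp [cycleClass]

theorem mem_cycleClasses {S : Finset α} : S ∈ σ.cycleClasses ↔ ∃ x, σ.cycleClass x = S := by
  simp [cycleClasses]

theorem cycleClass_eq_cycleClass_iff : σ.cycleClass x = σ.cycleClass y ↔ σ.SameCycle x y := by
  refine ⟨fun h => mem_cycleClass.1 (h ▸ mem_cycleClass.2 SameCycle.rfl), fun h => ?_⟩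
  ext z
  simp only [mem_cycleClass]
  exact ⟨h.symm.trans, h.trans⟩

theorem cycleClass_of_mem_support (hx : x ∈ σ.support) :
    σ.cycleClass x = (σ.cycleOf x).support := by
  ext y
  rw [mem_cycleClass, mem_support_cycleOf_iff, and_iff_left hx]

theorem cycleClass_of_apply_eq (hx : σ x = x) : σ.cycleClass x = {x} := by
  ext y
  simp only [mem_cycleClass, mem_singleton]
  exact ⟨fun h => (h.eq_of_left hx).symm, fun h => h ▸ SameCycle.rfl⟩

theorem card_fixed_add_card_support (σ : Perm α) :
    #{x | σ x = x} + #σ.support = Fintype.card α :=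
  card_filter_add_card_filter_not _

theorem support_eq_cycleClass_of_mem_cycleFactorsFinset {c : Perm α}
    (hc : c ∈ σ.cycleFactorsFinset) (hx : x ∈ c.support) : c.support = σ.cycleClass x := by
  rw [cycleClass_of_mem_support (mem_cycleFactorsFinset_support_le hc hx),
    ← (eq_cycleOf_of_mem_cycleFactorsFinset_iff σ c hc x).2 hx]

theorem card_cycleClasses (σ : Perm α) :
    #σ.cycleClasses = Multiset.card σ.cycleType + #{x | σ x = x} := by
  rw [cycleType_def, Multiset.card_map, card_val, ← card_disjSum]
  symm
  apply card_nbij (Sum.elim support singleton)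
  · rintro (c | x) hc <;> simp only [mem_coe, inl_mem_disjSum, inr_mem_disjSum, mem_filter,
      mem_univ, true_and] at hc <;> rw [mem_coe, mem_cycleClasses]
    · obtain ⟨x, hx⟩ := (mem_cycleFactorsFinset_iff.1 hc).1.nonempty_support
      exact ⟨x, (support_eq_cycleClass_of_mem_cycleFactorsFinset hc hx).symm⟩
    · exact ⟨x, cycleClass_of_apply_eq hc⟩
  · rintro (c | x) hc (d | y) hd h <;> simp only [mem_coe, inl_mem_disjSum, inr_mem_disjSum,
      mem_filter, mem_univ, true_and] at hc hd <;> simp only [Sum.elim_inl, Sum.elim_inr] at h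
    · obtain ⟨x, hx⟩ := (mem_cycleFactorsFinset_iff.1 hc).1.nonempty_support
      rw [(eq_cycleOf_of_mem_cycleFactorsFinset_iff σ c hc x).2 hx,
        (eq_cycleOf_of_mem_cycleFactorsFinset_iff σ d hd x).2 (h ▸ hx)]
    · have := (mem_cycleFactorsFinset_iff.1 hc).1.two_le_card_support
      simp [h] at this
    · have := (mem_cycleFactorsFinset_iff.1 hd).1.two_le_card_support
      simp [← h] at this
    · rw [singleton_injective h]
  · rintro S hS
    obtain ⟨x, rfl⟩ := mem_cycleClasses.1 hS
    by_cases hx : σ x = x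
    · exact ⟨.inr x, by simpa using hx, (cycleClass_of_apply_eq hx).symm⟩
    · refine ⟨.inl (σ.cycleOf x), ?_, (cycleClass_of_mem_support (mem_support.2 hx)).symm⟩
      simpa using cycleOf_mem_cycleFactorsFinset_iff.2 (mem_support.2 hx)

theorem sign_mul_neg_one_pow_card_cycleClasses (σ : Perm α) :
    sign σ * (-1) ^ #σ.cycleClasses = (-1) ^ Fintype.card α := by
  have hfix := card_fixed_add_card_support σ
  rw [sign_of_cycleType, sum_cycleType, card_cycleClasses, ← pow_add,
    show #σ.support + Multiset.card σ.cycleType + (Multiset.card σ.cycleType + #{x | σ x = x}) =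
      Fintype.card α + 2 * Multiset.card σ.cycleType by omega, pow_add, pow_mul]
  simp

theorem card_cycleClasses_swap_mul_ne (hab : a ≠ b) (σ : Perm α) :
    #(swap a b * σ).cycleClasses ≠ #σ.cycleClasses := by
  intro h
  have key := sign_mul_neg_one_pow_card_cycleClasses (swap a b * σ)
  rw [h, sign_mul, sign_swap hab, ← sign_mul_neg_one_pow_card_cycleClasses σ, neg_one_mul,
    neg_mul] at key
  exact units_ne_neg_self _ key.symm

theorem card_cycleClasses_eq_card_filter_add (σ : Perm α) (a b : α) :
    #σ.cycleClasses = #{S ∈ σ.cycleClasses | a ∉ S ∧ b ∉ S} +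
      if σ.SameCycle a b then 1 else 2 := by
  have hmeet : {S ∈ σ.cycleClasses | ¬(a ∉ S ∧ b ∉ S)} = {σ.cycleClass a, σ.cycleClass b} := by
    ext S
    simp only [mem_filter, mem_cycleClasses, mem_insert, mem_singleton, not_and_or, not_not]
    constructor
    · rintro ⟨⟨x, rfl⟩, h | h⟩
      · exact .inl (cycleClass_eq_cycleClass_iff.2 (mem_cycleClass.1 h))
      · exact .inr (cycleClass_eq_cycleClass_iff.2 (mem_cycleClass.1 h))
    · rintro (rfl | rfl)
      · exact ⟨⟨a, rfl⟩, .inl (mem_cycleClass.2 SameCycle.rfl)⟩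
      · exact ⟨⟨b, rfl⟩, .inr (mem_cycleClass.2 SameCycle.rfl)⟩
  rw [← card_filter_add_card_filter_not (s := σ.cycleClasses) (fun S => a ∉ S ∧ b ∉ S), hmeet]
  split_ifs with h
  · rw [cycleClass_eq_cycleClass_iff.2 h, pair_eq_singleton, card_singleton]
  · rw [card_pair (mt cycleClass_eq_cycleClass_iff.1 h)]

theorem cycleClass_swap_mul (ha : a ∉ σ.cycleClass x) (hb : b ∉ σ.cycleClass x) :
    (swap a b * σ).cycleClass x = σ.cycleClass x := by
  ext y
  simp only [mem_cycleClass] at ha hb ⊢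
  refine sameCycle_iff_of_forall_sameCycle fun z hz => ?_
  have hσz : σ.SameCycle x (σ z) := hz.apply_right
  exact swap_apply_of_ne_of_ne (fun h => ha (h ▸ hσz)) (fun h => hb (h ▸ hσz))

theorem filter_cycleClasses_swap_mul_subset (σ : Perm α) (a b : α) :
    {S ∈ (swap a b * σ).cycleClasses | a ∉ S ∧ b ∉ S} ⊆ {S ∈ σ.cycleClasses | a ∉ S ∧ b ∉ S} := by
  intro S hS
  simp only [mem_filter, mem_cycleClasses] at hS ⊢
  obtain ⟨⟨x, rfl⟩, ha, hb⟩ := hS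
  refine ⟨⟨x, ?_⟩, ha, hb⟩
  conv_lhs => rw [← swap_mul_self_mul a b σ]
  exact cycleClass_swap_mul ha hb

theorem filter_cycleClasses_swap_mul (σ : Perm α) (a b : α) :
    {S ∈ (swap a b * σ).cycleClasses | a ∉ S ∧ b ∉ S} = {S ∈ σ.cycleClasses | a ∉ S ∧ b ∉ S} :=
  (filter_cycleClasses_swap_mul_subset σ a b).antisymm <| by
    simpa only [swap_mul_self_mul] using filter_cycleClasses_swap_mul_subset (swap a b * σ) a b

theorem card_cycleClasses_swap_mul (hab : a ≠ b) (σ : Perm α) :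
    #(swap a b * σ).cycleClasses =
      if σ.SameCycle a b then #σ.cycleClasses + 1 else #σ.cycleClasses - 1 := by
  have hσ := card_cycleClasses_eq_card_filter_add σ a b
  have hτ := card_cycleClasses_eq_card_filter_add (swap a b * σ) a b
  rw [filter_cycleClasses_swap_mul] at hτ
  have hne := card_cycleClasses_swap_mul_ne hab σ
  split_ifs at hσ hτ ⊢ <;> omega

end Equiv.Perm

open Perm

variable {m : ℕ}

theorem cycleCount_eq_card_cycleClasses (σ : Perm (Fin m)) : cycleCount σ = #σ.cycleClasses :=
  (card_cycleClasses σ).symm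

theorem liftPerm_castSucc (α : Perm (Fin m)) (x : Fin m) :
    liftPerm α x.castSucc = (α x).castSucc := by
  simp [liftPerm]

theorem liftPerm_last (α : Perm (Fin m)) : liftPerm α (Fin.last m) = Fin.last m := by
  simp [liftPerm]

theorem liftPerm_eq_extendDomain (α : Perm (Fin m)) :
    liftPerm α = α.extendDomain (finSuccAboveEquiv (Fin.last m)) := by
  ext x
  induction x using Fin.lastCases with
  | last => rw [liftPerm_last, extendDomain_apply_not_subtype _ _ (by simp)]
  | cast y =>
    simpa [liftPerm_castSucc, finSuccAboveEquiv_apply] using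
      congrArg Fin.val (extendDomain_apply_image α (finSuccAboveEquiv (Fin.last m)) y).symm

theorem cycleCount_liftPerm (α : Perm (Fin m)) : cycleCount (liftPerm α) = cycleCount α + 1 := by
  have hcycleType : (liftPerm α).cycleType = α.cycleType := by
    rw [liftPerm_eq_extendDomain, cycleType_extendDomain]
  have hsupport : #(liftPerm α).support = #α.support := by
    rw [← sum_cycleType, hcycleType, sum_cycleType]
  have hlift := card_fixed_add_card_support (liftPerm α)
  have hα := card_fixed_add_card_support α
  simp only [Fintype.card_fin] at hlift hα
  simp only [cycleCount, hcycleType]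
  omega

theorem chainExt_zero (α : Perm (Fin (m + 1))) : chainExt α 0 = Fin.last (m + 1) := by
  rw [chainExt, mul_apply, swap_apply_left, liftPerm_last]

theorem chainExt_last (α : Perm (Fin (m + 1))) :
    chainExt α (Fin.last (m + 1)) = (α 0).castSucc := by
  rw [chainExt, mul_apply, swap_apply_right, ← Fin.castSucc_zero, liftPerm_castSucc]

theorem chainExt_castSucc_of_ne_zero (α : Perm (Fin (m + 1))) {x : Fin (m + 1)} (hx : x ≠ 0) :
    chainExt α x.castSucc = (α x).castSucc := by
  rw [chainExt, mul_apply, swap_apply_of_ne_of_ne _ (Fin.castSucc_lt_last x).ne, liftPerm_castSucc]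
  rwa [← Fin.castSucc_zero, Ne, Fin.castSucc_inj]

theorem chainExt_eq_swap_mul_liftPerm (α : Perm (Fin (m + 1))) :
    chainExt α = swap (α 0).castSucc (Fin.last (m + 1)) * liftPerm α := by
  rw [chainExt, mul_swap_eq_swap_mul, liftPerm_last, ← Fin.castSucc_zero, liftPerm_castSucc]

theorem cycleCount_chainExt (α : Perm (Fin (m + 1))) : cycleCount (chainExt α) = cycleCount α := by
  have hsep : ¬(liftPerm α).SameCycle (α 0).castSucc (Fin.last (m + 1)) := fun h =>
    (Fin.castSucc_lt_last _).ne (h.eq_of_right (liftPerm_last α))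
  rw [chainExt_eq_swap_mul_liftPerm, cycleCount_eq_card_cycleClasses,
    card_cycleClasses_swap_mul (Fin.castSucc_lt_last _).ne, if_neg hsep,
    ← cycleCount_eq_card_cycleClasses, cycleCount_liftPerm, Nat.add_sub_cancel]

theorem chainExt_sameCycle_last_castSucc_iff (α : Perm (Fin (m + 1))) (j : Fin (m + 1)) :
    (chainExt α).SameCycle (Fin.last (m + 1)) j.castSucc ↔ α.SameCycle 0 j := by
  constructor
  · intro h
    -- folding `last` back onto `0` turns each step of `chainExt α` into a step or a stay of `α`
    simpa using h.map_of_forall (Fin.lastCases 0 id) fun z _ => by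
      induction z using Fin.lastCases with
      | last => simpa [chainExt_last] using SameCycle.rfl.apply_right
      | cast x =>
        obtain rfl | hx := eq_or_ne x 0
        · rw [Fin.lastCases_castSucc, Fin.castSucc_zero, chainExt_zero, Fin.lastCases_last]
          rfl
        · simpa [chainExt_castSucc_of_ne_zero α hx] using SameCycle.rfl.apply_right
  · intro h
    have hlast : (chainExt α).SameCycle 0 (Fin.last (m + 1)) :=
      chainExt_zero α ▸ SameCycle.rfl.apply_right
    refine hlast.symm.trans (h.map_of_forall Fin.castSucc fun z _ => ?_)
    obtain rfl | hz := eq_or_ne z 0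
    · exact hlast.trans (chainExt_last α ▸ SameCycle.rfl.apply_right)
    · exact chainExt_castSucc_of_ne_zero α hz ▸ SameCycle.rfl.apply_right

/-- Cycle counts under the cut-and-reconnect construction: `c([α,0]) = c(α)`;
`c([α,j]) = c(α) + 1` if `j` lies in the cycle of `α` containing the distinguished
element `0`; `c([α,j]) = c(α) - 1` otherwise. -/
theorem insPerm_cycleCount (m : ℕ) (α : Equiv.Perm (Fin (m + 1))) :
    cycleCount (insPerm α none) = cycleCount α ∧
    ∀ j : Fin (m + 1),
      (α.SameCycle 0 j → cycleCount (insPerm α (some j)) = cycleCount α + 1) ∧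
      (¬ α.SameCycle 0 j → cycleCount (insPerm α (some j)) = cycleCount α - 1) := by
  refine ⟨cycleCount_chainExt α, fun j => ?_⟩
  have hcount := card_cycleClasses_swap_mul (Fin.castSucc_lt_last j).ne' (chainExt α)
  simp only [chainExt_sameCycle_last_castSucc_iff, ← cycleCount_eq_card_cycleClasses,
    cycleCount_chainExt] at hcount
  exact ⟨fun h => by rw [insPerm, hcount, if_pos h], fun h => by rw [insPerm, hcount, if_neg h]⟩
end
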